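/- Let A = (Q, Σ, δ, q₀, F) be a finite deterministic automaton that is connected and reduced. Then the language L(A) recognized by A is definite if and only if A avoids the pattern P_d, i.e., there do NOT exist distinct states p, q ∈ Q and a nonempty word x ∈ Σ⁺ with δ*(p,x) = p and δ*(q,x) = q. -/

import Mathlib

/-!
If a nonempty word `x` fixes two distinct states `p` and `q`, then `p` and `q` are reached by
words ending in arbitrarily long powers of `x`; composing with a word separating `p` from `q`
gives pairs of words with a common suffix of any length but different membership, so the
language is not definite. Conversely, if no such pattern exists, run `M` from two states in
parallel on a word of length at least `|Q|²`: by pigeonhole the pair of states repeats, so some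
nonempty factor fixes both components, which must therefore coincide. Hence all states are
synchronized by every word of length `|Q|²`, and membership depends only on such a suffix.
-/

/-- Every state of `M` is reachable from the start state. -/
def DFA.Connected {α σ : Type*} (M : DFA α σ) : Prop :=
  ∀ q : σ, ∃ u : List α, M.evalFrom M.start u = q

/-- `M` is reduced: connected, and any two distinct states are distinguishable
by some word. -/
def DFA.Reduced {α σ : Type*} (M : DFA α σ) : Prop :=
  M.Connected ∧ ∀ p q : σ, p ≠ q →
    ∃ u : List α, ¬(M.evalFrom p u ∈ M.accept ↔ M.evalFrom q u ∈ M.accept)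

/-- `M` admits the pattern `P_d`: two distinct states `p, q` and a nonempty
word `x` with `px = p` and `qx = q`. -/
def DFA.AdmitsPd {α σ : Type*} (M : DFA α σ) : Prop :=
  ∃ (p q : σ) (x : List α), p ≠ q ∧ x ≠ [] ∧
    M.evalFrom p x = p ∧ M.evalFrom q x = q

/-- A language is definite if membership only depends on the suffix of
length `k`, for some constant `k`. -/
def Definite {α : Type*} (L : Language α) : Prop :=
  ∃ k : ℕ, ∀ x y : List α, y.length = k → ((x ++ y) ∈ L ↔ y ∈ L)

namespace DFA

universe u v

variable {α : Type u} {σ : Type v}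

theorem evalFrom_inter {σ' : Type v} (M : DFA α σ) (M' : DFA α σ') (s : σ) (s' : σ')
    (x : List α) : (M.inter M').evalFrom (s, s') x = (M.evalFrom s x, M'.evalFrom s' x) := by
  induction x generalizing s s' with
  | nil => rfl
  | cons a x ih => exact ih _ _

theorem evalFrom_flatten_replicate {M : DFA α σ} {s : σ} {x : List α}
    (hx : M.evalFrom s x = s) (n : ℕ) : M.evalFrom s (List.replicate n x).flatten = s :=
  M.evalFrom_of_pow hx ⟨List.replicate n x, rfl, fun _ hz => List.eq_of_mem_replicate hz⟩

theorem evalFrom_eq_of_not_admitsPd [Fintype σ] {M : DFA α σ} (h : ¬ M.AdmitsPd) (p q : σ)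
    {y : List α} (hy : Fintype.card (σ × σ) ≤ y.length) :
    M.evalFrom p y = M.evalFrom q y := by
  obtain ⟨⟨r, r'⟩, a, b, c, rfl, -, hb, -, hloop, hc⟩ :=
    (M.inter M).evalFrom_split (s := (p, q)) hy rfl
  simp only [evalFrom_inter, Prod.mk.injEq] at hloop hc
  have hrr' : r = r' := by
    by_contra hne
    exact h ⟨r, r', b, hne, hb, hloop⟩
  rw [← hc.1, ← hc.2, hrr']

end DFA

theorem Definite.exists_mem_append_iff {α : Type*} {L : Language α} (hL : Definite L) :
    ∃ k : ℕ, ∀ w w' z : List α, k ≤ z.length → (w ++ z ∈ L ↔ w' ++ z ∈ L) := by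
  obtain ⟨k, hk⟩ := hL
  refine ⟨k, fun w w' z hz => ?_⟩
  have hlen : (z.drop (z.length - k)).length = k := by simp [Nat.sub_sub_self hz]
  rw [← List.take_append_drop (z.length - k) z, ← List.append_assoc, ← List.append_assoc,
    hk _ _ hlen, hk _ _ hlen]

theorem DFA.not_admitsPd_of_definite {α σ : Type*} {M : DFA α σ} (hred : M.Reduced)
    (hdef : Definite M.accepts) : ¬ M.AdmitsPd := by
  rintro ⟨p, q, x, hpq, hx, hpx, hqx⟩
  obtain ⟨k, hk⟩ := hdef.exists_mem_append_iff
  obtain ⟨u, hu⟩ := hred.2 p q hpq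
  obtain ⟨wp, rfl⟩ := hred.1 p
  obtain ⟨wq, rfl⟩ := hred.1 q
  have hlen : k ≤ ((List.replicate k x).flatten ++ u).length := by
    have := List.length_pos_iff.mpr hx
    simp only [List.length_append, List.length_flatten, List.map_replicate, List.sum_replicate,
      smul_eq_mul]
    nlinarith
  apply hu
  simpa only [mem_accepts, eval, evalFrom_of_append, evalFrom_flatten_replicate hpx,
    evalFrom_flatten_replicate hqx] using hk wp wq _ hlen

theorem DFA.definite_of_not_admitsPd {α σ : Type*} [Finite σ] {M : DFA α σ}
    (h : ¬ M.AdmitsPd) : Definite M.accepts := by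
  have := Fintype.ofFinite σ
  refine ⟨Fintype.card (σ × σ), fun x y hy => ?_⟩
  simp only [DFA.mem_accepts, DFA.eval, DFA.evalFrom_of_append,
    DFA.evalFrom_eq_of_not_admitsPd h (M.evalFrom M.start x) M.start hy.ge]

theorem definite_iff_avoids_Pd_general {α σ : Type*} [Finite σ]
    (M : DFA α σ) (hred : M.Reduced) :
    Definite M.accepts ↔ ¬ M.AdmitsPd :=
  ⟨DFA.not_admitsPd_of_definite hred, DFA.definite_of_not_admitsPd⟩

/-- A connected, reduced finite automaton recognizes a definite language iff
it avoids the pattern `P_d`. -/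
theorem definite_iff_avoids_Pd {α σ : Type*} [Finite α] [Finite σ]
    (M : DFA α σ) (hred : M.Reduced) :
    Definite M.accepts ↔ ¬ M.AdmitsPd :=
  definite_iff_avoids_Pd_general M hred
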